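/- arXiv:1907.01584 — 4 statements merged into one kernel-verified Lean document; each statement's English description precedes it below -/
import Mathlib

section
/- Hardy's inequality, first case: Let 1 ≤ p < ∞ and r > 1, and let f : (0,∞) → [0,∞) be a measurable function. Define F(x) = ∫₀ˣ f(t) dt. Then ∫₀^∞ x^{-r} F(x)^p dx ≤ (p/(r−1))^p · ∫₀^∞ x^{-r} (x·f(x))^p dx. -/
/-!
Fix `ε = (r - 1) / p`. Hölder's inequality against the weight `t ^ (ε - 1)` on `(0, x)` gives
`F(x) ^ p ≤ (x ^ ε / ε) ^ (p - 1) ∫₀ˣ f(t) ^ p t ^ ((1 - ε)(p - 1)) dt`. Integrating against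
`x ^ (-r)` and exchanging the order of integration (Tonelli on `0 < t < x`), the tail integral
`∫ₜ^∞ x ^ (-r) (x ^ ε / ε) ^ (p - 1) dx` equals `ε ^ (-p) t ^ (-ε)`, and the powers of `t`
combine to `t ^ (p - r)`; finally `ε ^ (-p) = (p / (r - 1)) ^ p`.
-/

open MeasureTheory Set
open scoped ENNReal

theorem ENNReal.rpow_lintegral_le_lintegral_mul_rpow {α : Type*} [MeasurableSpace α]
    {μ : Measure α} {p : ℝ} (hp : 1 ≤ p) {f h : α → ℝ≥0∞} (hf : AEMeasurable f μ)
    (hh : AEMeasurable h μ) (h_ne_zero : ∀ᵐ a ∂μ, h a ≠ 0) (h_ne_top : ∀ᵐ a ∂μ, h a ≠ ∞) :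
    (∫⁻ a, f a ∂μ) ^ p ≤ (∫⁻ a, f a ^ p * h a ^ (1 - p) ∂μ) * (∫⁻ a, h a ∂μ) ^ (p - 1) := by
  have hp0 : 0 < p := one_pos.trans_le hp
  have hf_eq : f =ᵐ[μ] fun a => (f a ^ p * h a ^ (1 - p)) ^ p⁻¹ * h a ^ (1 - p⁻¹) := by
    filter_upwards [h_ne_zero, h_ne_top] with a ha0 hatop
    rw [ENNReal.mul_rpow_of_nonneg _ _ (inv_nonneg.mpr hp0.le), ← ENNReal.rpow_mul,
      ← ENNReal.rpow_mul, mul_assoc, ← ENNReal.rpow_add _ _ ha0 hatop,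
      mul_inv_cancel₀ hp0.ne', ENNReal.rpow_one,
      show (1 - p) * p⁻¹ + (1 - p⁻¹) = 0 by field_simp; ring, ENNReal.rpow_zero, mul_one]
  -- Hölder with exponents `1/p`, `1 - 1/p` applied to `f ^ p * h ^ (1 - p)` and `h`
  have holder := lintegral_mul_norm_pow_le ((hf.pow_const p).mul (hh.pow_const (1 - p))) hh
    (inv_nonneg.mpr hp0.le) (sub_nonneg.mpr (inv_le_one_of_one_le₀ hp)) (add_sub_cancel _ _)
  calc (∫⁻ a, f a ∂μ) ^ p
      ≤ ((∫⁻ a, f a ^ p * h a ^ (1 - p) ∂μ) ^ p⁻¹ * (∫⁻ a, h a ∂μ) ^ (1 - p⁻¹)) ^ p := by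
        rw [lintegral_congr_ae hf_eq]
        gcongr
        exact holder
    _ = (∫⁻ a, f a ^ p * h a ^ (1 - p) ∂μ) * (∫⁻ a, h a ∂μ) ^ (p - 1) := by
        rw [ENNReal.mul_rpow_of_nonneg _ _ hp0.le, ← ENNReal.rpow_mul, ← ENNReal.rpow_mul,
          inv_mul_cancel₀ hp0.ne', ENNReal.rpow_one, sub_mul, one_mul, inv_mul_cancel₀ hp0.ne']

theorem lintegral_Ioo_zero_rpow {c x : ℝ} (hc : -1 < c) (hx : 0 < x) :
    ∫⁻ t in Ioo 0 x, ENNReal.ofReal (t ^ c) = ENNReal.ofReal (x ^ (c + 1) / (c + 1)) := by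
  have hint : IntegrableOn (fun t : ℝ => t ^ c) (Ioo 0 x) :=
    ((intervalIntegrable_iff_integrableOn_Ioc_of_le hx.le).mp
      (intervalIntegral.intervalIntegrable_rpow' hc)).mono_set Ioo_subset_Ioc_self
  rw [← ofReal_integral_eq_lintegral_ofReal hint
    (ae_restrict_of_forall_mem measurableSet_Ioo fun t ht => Real.rpow_nonneg ht.1.le c),
    ← integral_Ioc_eq_integral_Ioo, ← intervalIntegral.integral_of_le hx.le,
    integral_rpow (Or.inl hc), Real.zero_rpow (by linarith), sub_zero]

theorem lintegral_Ioi_rpow {c t : ℝ} (hc : c < -1) (ht : 0 < t) :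
    ∫⁻ x in Ioi t, ENNReal.ofReal (x ^ c) = ENNReal.ofReal (t ^ (c + 1) / -(c + 1)) := by
  rw [← ofReal_integral_eq_lintegral_ofReal (integrableOn_Ioi_rpow_of_lt hc ht)
    (ae_restrict_of_forall_mem measurableSet_Ioi fun x hx => Real.rpow_nonneg (ht.trans hx).le c),
    integral_Ioi_rpow_of_lt hc ht, div_neg, neg_div]

theorem rpow_setLIntegral_Ioo_zero_le {p ε x : ℝ} (hp : 1 ≤ p) (hε : 0 < ε) (hx : 0 < x)
    {f : ℝ → ℝ≥0∞} (hf : AEMeasurable f (volume.restrict (Ioo 0 x))) :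
    (∫⁻ t in Ioo 0 x, f t) ^ p ≤ ENNReal.ofReal ((x ^ ε / ε) ^ (p - 1)) *
      ∫⁻ t in Ioo 0 x, f t ^ p * ENNReal.ofReal (t ^ ((1 - ε) * (p - 1))) := by
  have hweight := ENNReal.rpow_lintegral_le_lintegral_mul_rpow hp hf
    (h := fun t => ENNReal.ofReal (t ^ (ε - 1))) (by fun_prop)
    (ae_restrict_of_forall_mem measurableSet_Ioo fun t ht =>
      (ENNReal.ofReal_pos.mpr (Real.rpow_pos_of_pos ht.1 _)).ne')
    (ae_of_all _ fun _ => ENNReal.ofReal_ne_top)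
  rw [lintegral_Ioo_zero_rpow (by linarith) hx, sub_add_cancel,
    ENNReal.ofReal_rpow_of_pos (div_pos (Real.rpow_pos_of_pos hx ε) hε)] at hweight
  refine hweight.trans_eq (mul_comm _ _ |>.trans ?_)
  congr 1
  refine setLIntegral_congr_fun measurableSet_Ioo fun t ht => ?_
  rw [ENNReal.ofReal_rpow_of_pos (Real.rpow_pos_of_pos ht.1 _), ← Real.rpow_mul ht.1.le]
  ring_nf

theorem hardy_weight_tail_integral {p r ε t : ℝ} (hε : 0 < ε) (hεp : ε * p = r - 1)
    (ht : 0 < t) :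
    ENNReal.ofReal (t ^ ((1 - ε) * (p - 1))) *
        ∫⁻ x in Ioi t, ENNReal.ofReal (x ^ (-r)) * ENNReal.ofReal ((x ^ ε / ε) ^ (p - 1))
      = ENNReal.ofReal (ε ^ (-p)) * ENNReal.ofReal (t ^ (p - r)) := by
  have hintegrand : ∀ x ∈ Ioi t,
      ENNReal.ofReal (x ^ (-r)) * ENNReal.ofReal ((x ^ ε / ε) ^ (p - 1))
        = ENNReal.ofReal (ε ^ (1 - p)) * ENNReal.ofReal (x ^ (-ε - 1)) := by
    intro x hx
    have hx0 : 0 < x := ht.trans hx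
    rw [← ENNReal.ofReal_mul (Real.rpow_nonneg hx0.le _),
      ← ENNReal.ofReal_mul (Real.rpow_nonneg hε.le _),
      Real.div_rpow (Real.rpow_nonneg hx0.le _) hε.le, ← Real.rpow_mul hx0.le,
      div_eq_mul_inv, ← Real.rpow_neg hε.le, ← mul_assoc, ← Real.rpow_add hx0]
    congr 1
    rw [mul_comm, show -(p - 1) = 1 - p by ring]
    congr 2
    linear_combination hεp
  rw [setLIntegral_congr_fun measurableSet_Ioi hintegrand,
    lintegral_const_mul' _ _ ENNReal.ofReal_ne_top,
    lintegral_Ioi_rpow (by linarith) ht, show -ε - 1 + 1 = -ε by ring, neg_neg,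
    ← ENNReal.ofReal_mul (Real.rpow_nonneg hε.le _),
    ← ENNReal.ofReal_mul (Real.rpow_nonneg ht.le _),
    ← ENNReal.ofReal_mul (Real.rpow_nonneg hε.le _)]
  congr 1
  rw [show p - r = (1 - ε) * (p - 1) + -ε by linear_combination hεp,
    show -p = 1 - p - 1 by ring, Real.rpow_add ht, Real.rpow_sub_one hε.ne']
  ring

theorem lintegral_Ioi_mul_setLIntegral_Ioo_comm {a : ℝ} {w g : ℝ → ℝ≥0∞} (hw : Measurable w)
    (hg : Measurable g) :
    ∫⁻ x in Ioi a, w x * ∫⁻ t in Ioo a x, g t = ∫⁻ t in Ioi a, g t * ∫⁻ x in Ioi t, w x := by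
  have hK : Measurable (Function.uncurry fun x t : ℝ => if t < x then w x * g t else 0) :=
    Measurable.ite (measurableSet_lt measurable_snd measurable_fst)
      ((hw.comp measurable_fst).mul (hg.comp measurable_snd)) measurable_const
  have inner_Ioo : ∀ x, w x * ∫⁻ t in Ioo a x, g t
      = ∫⁻ t in Ioi a, if t < x then w x * g t else 0 := by
    intro x
    simp_rw [← mul_ite_zero, ← mem_Iio, ← indicator_apply]
    rw [lintegral_const_mul _ (hg.indicator measurableSet_Iio),
      lintegral_indicator measurableSet_Iio, Measure.restrict_restrict measurableSet_Iio,
      Iio_inter_Ioi]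
  have inner_Ioi : ∀ t ∈ Ioi a, g t * ∫⁻ x in Ioi t, w x
      = ∫⁻ x in Ioi a, if t < x then w x * g t else 0 := by
    intro t ht
    simp_rw [mul_comm (w _) (g t), ← mul_ite_zero, ← mem_Ioi, ← indicator_apply]
    rw [lintegral_const_mul _ (hw.indicator measurableSet_Ioi),
      lintegral_indicator measurableSet_Ioi, Measure.restrict_restrict measurableSet_Ioi,
      inter_eq_left.mpr (Ioi_subset_Ioi ht.le)]
  calc ∫⁻ x in Ioi a, w x * ∫⁻ t in Ioo a x, g t
      = ∫⁻ x in Ioi a, ∫⁻ t in Ioi a, if t < x then w x * g t else 0 := by simp_rw [inner_Ioo]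
    _ = ∫⁻ t in Ioi a, ∫⁻ x in Ioi a, if t < x then w x * g t else 0 :=
        lintegral_lintegral_swap hK.aemeasurable
    _ = ∫⁻ t in Ioi a, g t * ∫⁻ x in Ioi t, w x :=
        (setLIntegral_congr_fun measurableSet_Ioi inner_Ioi).symm

/-- Hardy's inequality, first case: for `1 ≤ p < ∞`, `r > 1` and a nonnegative
measurable `f` on `(0,∞)`, with `F x = ∫₀ˣ f`,
`∫₀^∞ x^(-r) F(x)^p dx ≤ (p/(r-1))^p ∫₀^∞ x^(-r) (x f(x))^p dx`. -/
theorem hardy_inequality_first_case (p r : ℝ) (hp : 1 ≤ p) (hr : 1 < r)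
    (f : ℝ → ENNReal) (hf : Measurable f) :
    ∫⁻ x in Ioi (0:ℝ),
        ENNReal.ofReal (x ^ (-r)) * (∫⁻ t in Ioo (0:ℝ) x, f t) ^ p
      ≤ ENNReal.ofReal ((p / (r - 1)) ^ p) *
        ∫⁻ x in Ioi (0:ℝ),
          ENNReal.ofReal (x ^ (-r)) * (ENNReal.ofReal x * f x) ^ p := by
  have hp0 : 0 < p := one_pos.trans_le hp
  set ε := (r - 1) / p
  have hε : 0 < ε := div_pos (by linarith) hp0
  have hεp : ε * p = r - 1 := div_mul_cancel₀ _ hp0.ne'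
  calc ∫⁻ x in Ioi 0, ENNReal.ofReal (x ^ (-r)) * (∫⁻ t in Ioo 0 x, f t) ^ p
      ≤ ∫⁻ x in Ioi 0, ENNReal.ofReal (x ^ (-r)) * ENNReal.ofReal ((x ^ ε / ε) ^ (p - 1)) *
          ∫⁻ t in Ioo 0 x, f t ^ p * ENNReal.ofReal (t ^ ((1 - ε) * (p - 1))) := by
        refine setLIntegral_mono' measurableSet_Ioi fun x hx => ?_
        rw [mul_assoc]
        gcongr
        exact rpow_setLIntegral_Ioo_zero_le hp hε hx hf.aemeasurable
    _ = ∫⁻ t in Ioi 0, f t ^ p * ENNReal.ofReal (t ^ ((1 - ε) * (p - 1))) *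
          ∫⁻ x in Ioi t, ENNReal.ofReal (x ^ (-r)) * ENNReal.ofReal ((x ^ ε / ε) ^ (p - 1)) :=
        lintegral_Ioi_mul_setLIntegral_Ioo_comm (by fun_prop) (by fun_prop)
    _ = ∫⁻ t in Ioi 0, ENNReal.ofReal (ε ^ (-p)) *
          (ENNReal.ofReal (t ^ (-r)) * (ENNReal.ofReal t * f t) ^ p) := by
        refine setLIntegral_congr_fun measurableSet_Ioi fun t ht => ?_
        rw [mul_assoc, hardy_weight_tail_integral hε hεp ht, ENNReal.mul_rpow_of_nonneg _ _ hp0.le,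
          ENNReal.ofReal_rpow_of_pos ht, sub_eq_add_neg, Real.rpow_add ht,
          ENNReal.ofReal_mul (Real.rpow_nonneg ht.le _)]
        ring
    _ = _ := by
        rw [lintegral_const_mul' _ _ ENNReal.ofReal_ne_top, Real.rpow_neg hε.le,
          ← Real.inv_rpow hε.le, inv_div]
end

section
/- Hardy's inequality, second case: Let 1 ≤ p < ∞ and r < 1, and let f : (0,∞) → [0,∞) be a measurable function. Define F(x) = ∫ₓ^∞ f(t) dt. Then ∫₀^∞ x^{-r} F(x)^p dx ≤ (p/(1−r))^p · ∫₀^∞ x^{-r} (x·f(x))^p dx. -/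
/-!
With `b = (1 - r) / p`, Hölder's inequality against the weight `t ^ (-(b + 1))`, whose tail
integral over `(x, ∞)` is `x ^ (-b) / b`, gives
`F(x) ^ p ≤ b ^ (1 - p) x ^ (-b (p - 1)) ∫ₓ^∞ f(t) ^ p t ^ ((b + 1) (p - 1)) dt`.
Multiplying by `x ^ (-r)` leaves the weight `x ^ (b - 1)`; exchanging the order of integration
and using `∫₀ᵗ x ^ (b - 1) dx = t ^ b / b` turns the right-hand side into
`b ^ (-p) ∫₀^∞ t ^ (p - r) f(t) ^ p dt`, and `b⁻¹ = p / (1 - r)`.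
-/

open MeasureTheory Set

theorem ENNReal.lintegral_mul_rpow_le {α : Type*} [MeasurableSpace α] {μ : Measure α} {p : ℝ}
    (hp : 1 ≤ p) {u w : α → ENNReal} (hu : AEMeasurable u μ) (hw : AEMeasurable w μ) :
    (∫⁻ a, u a * w a ∂μ) ^ p
      ≤ (∫⁻ a, u a ^ p * w a ∂μ) * (∫⁻ a, w a ∂μ) ^ (p - 1) := by
  rcases hp.eq_or_lt with rfl | hp
  · simp
  have hpq := Real.HolderConjugate.conjExponent hp
  set q := p.conjExponent
  have hp0 : 0 < p := by linarith
  have hsplit : ∀ a, u a * w a = (u a * w a ^ (1 / p)) * w a ^ (1 / q) := fun a => by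
    rw [mul_assoc, ← ENNReal.rpow_add_of_nonneg _ _ (by positivity) hpq.symm.one_div_pos.le,
      hpq.one_div_add_one_div, div_one, ENNReal.rpow_one]
  have hfirst : ∀ a, (u a * w a ^ (1 / p)) ^ p = u a ^ p * w a := fun a => by
    rw [ENNReal.mul_rpow_of_nonneg _ _ hp0.le, ← ENNReal.rpow_mul, one_div_mul_cancel hp0.ne',
      ENNReal.rpow_one]
  have hsecond : ∀ a, (w a ^ (1 / q)) ^ q = w a := fun a => by
    rw [← ENNReal.rpow_mul, one_div_mul_cancel hpq.symm.pos.ne', ENNReal.rpow_one]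
  have holder := ENNReal.lintegral_mul_le_Lp_mul_Lq μ hpq
    (f := fun a => u a * w a ^ (1 / p)) (g := fun a => w a ^ (1 / q))
    (hu.mul (hw.pow_const _)) (hw.pow_const _)
  simp only [Pi.mul_apply, ← hsplit, hfirst, hsecond] at holder
  calc (∫⁻ a, u a * w a ∂μ) ^ p
      ≤ ((∫⁻ a, u a ^ p * w a ∂μ) ^ (1 / p) * (∫⁻ a, w a ∂μ) ^ (1 / q)) ^ p :=
        ENNReal.rpow_le_rpow holder hp0.le
    _ = (∫⁻ a, u a ^ p * w a ∂μ) * (∫⁻ a, w a ∂μ) ^ (p - 1) := by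
        rw [ENNReal.mul_rpow_of_nonneg _ _ hp0.le, ← ENNReal.rpow_mul, ← ENNReal.rpow_mul,
          one_div_mul_cancel hp0.ne', ENNReal.rpow_one, one_div_mul_eq_div,
          hpq.div_conj_eq_sub_one]

lemma ofReal_rpow_mul_ofReal_rpow {x : ℝ} (hx : 0 < x) (s u : ℝ) :
    ENNReal.ofReal (x ^ s) * ENNReal.ofReal (x ^ u) = ENNReal.ofReal (x ^ (s + u)) := by
  rw [← ENNReal.ofReal_mul (Real.rpow_nonneg hx.le s), ← Real.rpow_add hx]

lemma ofReal_rpow_rpow {x : ℝ} (hx : 0 < x) (s p : ℝ) :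
    ENNReal.ofReal (x ^ s) ^ p = ENNReal.ofReal (x ^ (s * p)) := by
  rw [ENNReal.ofReal_rpow_of_pos (Real.rpow_pos_of_pos hx s), ← Real.rpow_mul hx.le]

lemma setLIntegral_Ioi_ofReal_rpow {x s : ℝ} (hx : 0 < x) (hs : s < -1) :
    ∫⁻ t in Ioi x, ENNReal.ofReal (t ^ s)
      = ENNReal.ofReal (-(s + 1))⁻¹ * ENNReal.ofReal (x ^ (s + 1)) := by
  rw [← ofReal_integral_eq_lintegral_ofReal (integrableOn_Ioi_rpow_of_lt hs hx)
      ((ae_restrict_iff' measurableSet_Ioi).mpr (.of_forall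
        fun t ht => Real.rpow_nonneg (hx.trans ht).le s)),
    integral_Ioi_rpow_of_lt hs hx, ← ENNReal.ofReal_mul (inv_pos.2 (by linarith)).le, inv_neg]
  ring_nf

lemma setLIntegral_Ioo_zero_ofReal_rpow {t s : ℝ} (ht : 0 < t) (hs : -1 < s) :
    ∫⁻ x in Ioo 0 t, ENNReal.ofReal (x ^ s)
      = ENNReal.ofReal (s + 1)⁻¹ * ENNReal.ofReal (t ^ (s + 1)) := by
  have hint : ∫ x in Ioo 0 t, x ^ s = (s + 1)⁻¹ * t ^ (s + 1) := by
    rw [Measure.restrict_congr_set Ioo_ae_eq_Ioc, ← intervalIntegral.integral_of_le ht.le,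
      integral_rpow (Or.inl hs), Real.zero_rpow (by linarith)]
    ring
  rw [← ENNReal.ofReal_mul (inv_pos.2 (by linarith)).le, ← hint,
    ← ofReal_integral_eq_lintegral_ofReal]
  · exact (intervalIntegrable_iff_integrableOn_Ioo_of_le ht.le).mp
      (intervalIntegral.intervalIntegrable_rpow' hs)
  · exact (ae_restrict_iff' measurableSet_Ioo).mpr
      (.of_forall fun x hx => Real.rpow_nonneg hx.1.le s)

theorem setLIntegral_Ioi_mul_setLIntegral_Ioi_swap {a : ℝ} {φ ψ : ℝ → ENNReal}
    (hφ : Measurable φ) (hψ : Measurable ψ) :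
    ∫⁻ x in Ioi a, φ x * ∫⁻ t in Ioi x, ψ t
      = ∫⁻ t in Ioi a, ψ t * ∫⁻ x in Ioo a t, φ x := by
  set G : ℝ × ℝ → ENNReal := {z | z.1 < z.2}.indicator fun z => φ z.1 * ψ z.2
  have hG : Measurable G := ((hφ.comp measurable_fst).mul (hψ.comp measurable_snd)).indicator
    (measurableSet_lt measurable_fst measurable_snd)
  have hleft : ∀ x t, G (x, t) = φ x * (Ioi x).indicator ψ t := fun x t => by
    by_cases h : x < t <;> simp [G, h]
  have hright : ∀ x t, G (x, t) = (Iio t).indicator φ x * ψ t := fun x t => by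
    by_cases h : x < t <;> simp [G, h]
  calc ∫⁻ x in Ioi a, φ x * ∫⁻ t in Ioi x, ψ t
      = ∫⁻ x in Ioi a, ∫⁻ t in Ioi a, G (x, t) := by
        refine setLIntegral_congr_fun measurableSet_Ioi fun x hx => ?_
        simp_rw [hleft]
        rw [lintegral_const_mul _ (hψ.indicator measurableSet_Ioi),
          lintegral_indicator measurableSet_Ioi, Measure.restrict_restrict measurableSet_Ioi,
          inter_eq_left.mpr (Ioi_subset_Ioi (le_of_lt hx))]
    _ = ∫⁻ t in Ioi a, ∫⁻ x in Ioi a, G (x, t) := lintegral_lintegral_swap hG.aemeasurable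
    _ = ∫⁻ t in Ioi a, ψ t * ∫⁻ x in Ioo a t, φ x := by
        refine setLIntegral_congr_fun measurableSet_Ioi fun t _ => ?_
        simp_rw [hright]
        rw [lintegral_mul_const _ (hφ.indicator measurableSet_Iio),
          lintegral_indicator measurableSet_Iio, Measure.restrict_restrict measurableSet_Iio,
          Iio_inter_Ioi, mul_comm]

lemma setLIntegral_Ioi_rpow_le_weighted {f : ℝ → ENNReal} (hf : Measurable f) {p b x : ℝ}
    (hp : 1 ≤ p) (hb : 0 < b) (hx : 0 < x) :
    (∫⁻ t in Ioi x, f t) ^ p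
      ≤ ENNReal.ofReal b⁻¹ ^ (p - 1) * ENNReal.ofReal (x ^ (-b * (p - 1)))
        * ∫⁻ t in Ioi x, f t ^ p * ENNReal.ofReal (t ^ ((b + 1) * (p - 1))) := by
  set u : ℝ → ENNReal := fun t => f t * ENNReal.ofReal (t ^ (b + 1))
  set w : ℝ → ENNReal := fun t => ENNReal.ofReal (t ^ (-(b + 1)))
  have hf_eq : ∫⁻ t in Ioi x, f t = ∫⁻ t in Ioi x, u t * w t := by
    refine setLIntegral_congr_fun measurableSet_Ioi fun t ht => ?_
    rw [mul_assoc, ofReal_rpow_mul_ofReal_rpow (hx.trans ht), add_neg_cancel, Real.rpow_zero,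
      ENNReal.ofReal_one, mul_one]
  have hu_eq : ∫⁻ t in Ioi x, u t ^ p * w t
      = ∫⁻ t in Ioi x, f t ^ p * ENNReal.ofReal (t ^ ((b + 1) * (p - 1))) := by
    refine setLIntegral_congr_fun measurableSet_Ioi fun t ht => ?_
    rw [ENNReal.mul_rpow_of_nonneg _ _ (by linarith), ofReal_rpow_rpow (hx.trans ht), mul_assoc,
      ofReal_rpow_mul_ofReal_rpow (hx.trans ht)]
    ring_nf
  have hw_eq : ∫⁻ t in Ioi x, w t = ENNReal.ofReal b⁻¹ * ENNReal.ofReal (x ^ (-b)) := by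
    rw [setLIntegral_Ioi_ofReal_rpow hx (by linarith)]
    ring_nf
  calc (∫⁻ t in Ioi x, f t) ^ p
      ≤ (∫⁻ t in Ioi x, u t ^ p * w t) * (∫⁻ t in Ioi x, w t) ^ (p - 1) := by
        rw [hf_eq]
        exact ENNReal.lintegral_mul_rpow_le hp (by fun_prop) (by fun_prop)
    _ = _ := by
        rw [hu_eq, hw_eq, ENNReal.mul_rpow_of_nonneg _ _ (by linarith), ofReal_rpow_rpow hx]
        ring

lemma setLIntegral_Ioi_zero_rpow_mul_setLIntegral_Ioi_eq {ψ : ℝ → ENNReal}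
    (hψ : Measurable ψ) {b : ℝ} (hb : 0 < b) :
    ∫⁻ x in Ioi 0, ENNReal.ofReal (x ^ (b - 1)) * ∫⁻ t in Ioi x, ψ t
      = ENNReal.ofReal b⁻¹ * ∫⁻ t in Ioi 0, ENNReal.ofReal (t ^ b) * ψ t := by
  rw [setLIntegral_Ioi_mul_setLIntegral_Ioi_swap (by fun_prop) hψ,
    ← lintegral_const_mul' _ _ ENNReal.ofReal_ne_top]
  refine setLIntegral_congr_fun measurableSet_Ioi fun t ht => ?_
  rw [setLIntegral_Ioo_zero_ofReal_rpow ht (by linarith), sub_add_cancel]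
  ring

lemma ofReal_rpow_neg_mul_setLIntegral_Ioi_rpow_le {f : ℝ → ENNReal} (hf : Measurable f)
    {p r b x : ℝ} (hp : 1 ≤ p) (hb : 0 < b) (hbp : b * p = 1 - r) (hx : 0 < x) :
    ENNReal.ofReal (x ^ (-r)) * (∫⁻ t in Ioi x, f t) ^ p
      ≤ ENNReal.ofReal b⁻¹ ^ (p - 1) * (ENNReal.ofReal (x ^ (b - 1))
        * ∫⁻ t in Ioi x, f t ^ p * ENNReal.ofReal (t ^ ((b + 1) * (p - 1)))) := calc
  _ ≤ ENNReal.ofReal (x ^ (-r)) * (ENNReal.ofReal b⁻¹ ^ (p - 1)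
        * ENNReal.ofReal (x ^ (-b * (p - 1)))
        * ∫⁻ t in Ioi x, f t ^ p * ENNReal.ofReal (t ^ ((b + 1) * (p - 1)))) := by
    gcongr
    exact setLIntegral_Ioi_rpow_le_weighted hf hp hb hx
  _ = ENNReal.ofReal b⁻¹ ^ (p - 1)
        * (ENNReal.ofReal (x ^ (-r)) * ENNReal.ofReal (x ^ (-b * (p - 1)))
        * ∫⁻ t in Ioi x, f t ^ p * ENNReal.ofReal (t ^ ((b + 1) * (p - 1)))) := by ring
  _ = _ := by
    rw [ofReal_rpow_mul_ofReal_rpow hx]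
    congr 4
    linear_combination -hbp

/-- Hardy's inequality, second case: for `1 ≤ p < ∞`, `r < 1` and a nonnegative
measurable `f` on `(0,∞)`, with `F x = ∫ₓ^∞ f`,
`∫₀^∞ x^(-r) F(x)^p dx ≤ (p/(1-r))^p ∫₀^∞ x^(-r) (x f(x))^p dx`. -/
theorem hardy_inequality_second_case (p r : ℝ) (hp : 1 ≤ p) (hr : r < 1)
    (f : ℝ → ENNReal) (hf : Measurable f) :
    ∫⁻ x in Ioi (0:ℝ),
        ENNReal.ofReal (x ^ (-r)) * (∫⁻ t in Ioi x, f t) ^ p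
      ≤ ENNReal.ofReal ((p / (1 - r)) ^ p) *
        ∫⁻ x in Ioi (0:ℝ),
          ENNReal.ofReal (x ^ (-r)) * (ENNReal.ofReal x * f x) ^ p := by
  obtain ⟨b, hb, hbp⟩ : ∃ b, 0 < b ∧ b * p = 1 - r :=
    ⟨(1 - r) / p, div_pos (by linarith) (by linarith), div_mul_cancel₀ _ (by linarith)⟩
  have hc : ENNReal.ofReal b⁻¹ ^ (p - 1) * ENNReal.ofReal b⁻¹
      = ENNReal.ofReal ((p / (1 - r)) ^ p) := by
    conv_lhs => enter [2]; rw [← ENNReal.rpow_one (ENNReal.ofReal b⁻¹)]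
    rw [← ENNReal.rpow_add _ _ (by simpa using hb) ENNReal.ofReal_ne_top, sub_add_cancel,
      ENNReal.ofReal_rpow_of_nonneg (by positivity) (by linarith), ← hbp,
      div_mul_cancel_right₀ (by linarith)]
  calc _ ≤ ∫⁻ x in Ioi (0:ℝ), ENNReal.ofReal b⁻¹ ^ (p - 1)
          * (ENNReal.ofReal (x ^ (b - 1))
            * ∫⁻ t in Ioi x, f t ^ p * ENNReal.ofReal (t ^ ((b + 1) * (p - 1)))) :=
        setLIntegral_mono' measurableSet_Ioi fun x hx =>
          ofReal_rpow_neg_mul_setLIntegral_Ioi_rpow_le hf hp hb hbp hx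
    _ = ENNReal.ofReal b⁻¹ ^ (p - 1) * ENNReal.ofReal b⁻¹ * ∫⁻ t in Ioi 0,
          ENNReal.ofReal (t ^ b) * (f t ^ p * ENNReal.ofReal (t ^ ((b + 1) * (p - 1)))) := by
        rw [lintegral_const_mul' _ _ (ENNReal.rpow_ne_top_of_nonneg (by linarith)
          ENNReal.ofReal_ne_top),
          setLIntegral_Ioi_zero_rpow_mul_setLIntegral_Ioi_eq (by fun_prop) hb, mul_assoc]
    _ = _ := by
        rw [hc]
        refine congrArg _ (setLIntegral_congr_fun measurableSet_Ioi fun t ht => ?_)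
        rw [ENNReal.mul_rpow_of_nonneg _ _ (by linarith), ENNReal.ofReal_rpow_of_pos ht,
          mul_left_comm, ofReal_rpow_mul_ofReal_rpow ht, ← mul_assoc,
          ofReal_rpow_mul_ofReal_rpow ht, mul_comm]
        congr 3
        linear_combination hbp
end

section
/- Abstract logarithmic estimate for singular kernels: Let (X, σ) be a measure space, let n, C > 0 be real constants, and let g : X → ℝ be a measurable function such that σ({x ∈ X : g(x) ≤ t}) ≤ C·tⁿ for every t > 0. Then there exists a constant K > 0, depending only on n and C, such that for all real numbers r, δ with 0 < r < δ, if g(x) ≥ r for every x ∈ X, then ∫_{ {x : g(x) < δ} } g(x)^{-n} dσ(x) ≤ K·(1 + log(δ/r)). -/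
/-!
Layer cake: `∫_{g < δ} g^{-n} dσ = ∫₀^∞ σ{g < δ, t < g^{-n}} dt`. The integrand is at most
`σ{g < δ} ≤ C δⁿ` for `t ≤ δ^{-n}`, at most `σ{g < t^{-1/n}} ≤ C / t` for `δ^{-n} < t ≤ r^{-n}`,
and vanishes for `t > r^{-n}` because `g ≥ r`. Integrating gives `C + C n log (δ / r)`.
-/

open MeasureTheory Set

theorem setLIntegral_Ioc_ofReal_div {a b : ℝ} (C : ℝ) (hC : 0 ≤ C) (ha : 0 < a) (hab : a ≤ b) :
    ∫⁻ t in Ioc a b, ENNReal.ofReal (C / t) = ENNReal.ofReal (C * Real.log (b / a)) := by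
  have hpos : ∀ t ∈ Icc a b, 0 < t := fun t ht => ha.trans_le ht.1
  have hint : IntegrableOn (fun t : ℝ => C / t) (Ioc a b) :=
    (ContinuousOn.integrableOn_Icc (continuousOn_const.div continuousOn_id
      fun t ht => (hpos t ht).ne')).mono_set Ioc_subset_Icc_self
  have hnonneg : 0 ≤ᵐ[volume.restrict (Ioc a b)] fun t : ℝ => C / t := by
    filter_upwards [ae_restrict_mem measurableSet_Ioc] with t ht
    exact div_nonneg hC (hpos t (Ioc_subset_Icc_self ht)).le
  rw [← ofReal_integral_eq_lintegral_ofReal hint hnonneg, ← intervalIntegral.integral_of_le hab]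
  simp_rw [div_eq_mul_inv C]
  rw [intervalIntegral.integral_const_mul, integral_inv_of_pos ha (ha.trans_le hab)]

theorem lintegral_ofReal_le_of_meas_lt_le_div {X : Type*} [MeasurableSpace X] (ν : Measure X)
    {f : X → ℝ} (hf : AEMeasurable f ν) (hf0 : 0 ≤ᵐ[ν] f) {a b C : ℝ} (ha : 0 < a) (hab : a ≤ b)
    (hfb : ∀ᵐ x ∂ν, f x ≤ b) (hC : 0 ≤ C)
    (hdist : ∀ t ∈ Ioc a b, ν {x | t < f x} ≤ ENNReal.ofReal (C / t)) :
    ∫⁻ x, ENNReal.ofReal (f x) ∂ν ≤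
      ν univ * ENNReal.ofReal a + ENNReal.ofReal (C * Real.log (b / a)) := by
  set F : ℝ → ENNReal := fun t => ν {x | t < f x}
  have hlow : ∫⁻ t in Ioc 0 a, F t ≤ ν univ * ENNReal.ofReal a := by
    calc ∫⁻ t in Ioc 0 a, F t ≤ ∫⁻ _ in Ioc 0 a, ν univ :=
          lintegral_mono fun t => measure_mono (subset_univ _)
      _ = ν univ * ENNReal.ofReal a := by rw [setLIntegral_const, Real.volume_Ioc, sub_zero]
  have hmid : ∫⁻ t in Ioc a b, F t ≤ ENNReal.ofReal (C * Real.log (b / a)) := by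
    rw [← setLIntegral_Ioc_ofReal_div C hC ha hab]
    exact setLIntegral_mono (measurable_const.div measurable_id).ennreal_ofReal hdist
  have hhigh : ∫⁻ t in Ioi b, F t = 0 := by
    have hzero : ∀ t ∈ Ioi b, F t = 0 := fun t ht =>
      measure_mono_null (fun x hx => not_le.mpr ((mem_Ioi.mp ht).trans hx)) (ae_iff.mp hfb)
    rw [setLIntegral_congr_fun measurableSet_Ioi hzero, lintegral_zero]
  have hcover : Ioi (0 : ℝ) ⊆ Ioc 0 a ∪ Ioc a b ∪ Ioi b := by
    rw [Ioc_union_Ioc_eq_Ioc ha.le hab, Ioc_union_Ioi_eq_Ioi (ha.le.trans hab)]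
  calc ∫⁻ x, ENNReal.ofReal (f x) ∂ν = ∫⁻ t in Ioi 0, F t := lintegral_eq_lintegral_meas_lt ν hf0 hf
    _ ≤ ∫⁻ t in Ioc 0 a ∪ Ioc a b ∪ Ioi b, F t := lintegral_mono_set hcover
    _ ≤ (∫⁻ t in Ioc 0 a, F t) + (∫⁻ t in Ioc a b, F t) + ∫⁻ t in Ioi b, F t :=
          (lintegral_union_le _ _ _).trans (add_le_add_left (lintegral_union_le _ _ _) _)
    _ ≤ _ := by rw [hhigh, add_zero]; exact add_le_add hlow hmid

theorem measure_lt_rpow_neg_le {X : Type*} [MeasurableSpace X] (σ : Measure X) {g : X → ℝ}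
    {n C : ℝ} (hn : 0 < n) (hg : ∀ x, 0 < g x)
    (hσ : ∀ t : ℝ, 0 < t → σ {x | g x ≤ t} ≤ ENNReal.ofReal (C * t ^ n)) {t : ℝ} (ht : 0 < t) :
    σ {x | t < g x ^ (-n)} ≤ ENNReal.ofReal (C / t) := by
  have hs : 0 < t ^ (-n)⁻¹ := Real.rpow_pos_of_pos ht _
  have hsub : {x | t < g x ^ (-n)} ⊆ {x | g x ≤ t ^ (-n)⁻¹} := fun x hx =>
    ((Real.lt_rpow_inv_iff_of_neg (hg x) ht (neg_neg_of_pos hn)).mpr hx).le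
  have hpow : (t ^ (-n)⁻¹) ^ n = t⁻¹ := by
    rw [← Real.rpow_mul ht.le, inv_neg, neg_mul, inv_mul_cancel₀ hn.ne', Real.rpow_neg_one]
  calc σ {x | t < g x ^ (-n)} ≤ σ {x | g x ≤ t ^ (-n)⁻¹} := measure_mono hsub
    _ ≤ ENNReal.ofReal (C / t) := by rw [div_eq_mul_inv, ← hpow]; exact hσ _ hs

/-- Abstract logarithmic estimate for singular kernels: if `σ {g ≤ t} ≤ C tⁿ` for
all `t > 0`, then there is `K > 0`, depending only on `n` and `C`, such that for
`0 < r < δ`, if `g ≥ r` everywhere, then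
`∫_{g < δ} g^{-n} dσ ≤ K (1 + log(δ/r))`. -/
theorem log_estimate_singular_kernel (n C : ℝ) (hn : 0 < n) (hC : 0 < C) :
    ∃ K : ℝ, 0 < K ∧
      ∀ (X : Type) [MeasurableSpace X] (σ : Measure X) (g : X → ℝ),
        Measurable g →
        (∀ t : ℝ, 0 < t → σ {x | g x ≤ t} ≤ ENNReal.ofReal (C * t ^ n)) →
        ∀ r δ : ℝ, 0 < r → r < δ → (∀ x, r ≤ g x) →
          ∫⁻ x in {x | g x < δ}, ENNReal.ofReal (g x ^ (-n)) ∂σ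
            ≤ ENNReal.ofReal (K * (1 + Real.log (δ / r))) := by
  refine ⟨C * (1 + n), by positivity, fun X _ σ g hgm hσ r δ hr hrδ hgr => ?_⟩
  have hδ : 0 < δ := hr.trans hrδ
  have hg : ∀ x, 0 < g x := fun x => hr.trans_le (hgr x)
  have hvol : σ.restrict {x | g x < δ} univ ≤ ENNReal.ofReal (C * δ ^ n) := by
    rw [Measure.restrict_apply_univ]
    exact (measure_mono fun x (hx : g x < δ) => hx.le).trans (hσ δ hδ)
  have hlog : Real.log (r ^ (-n) / δ ^ (-n)) = n * Real.log (δ / r) := by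
    rw [← Real.div_rpow hr.le hδ.le, Real.log_rpow (div_pos hr hδ), ← inv_div δ r, Real.log_inv]
    ring
  calc ∫⁻ x in {x | g x < δ}, ENNReal.ofReal (g x ^ (-n)) ∂σ
      ≤ σ.restrict {x | g x < δ} univ * ENNReal.ofReal (δ ^ (-n))
          + ENNReal.ofReal (C * Real.log (r ^ (-n) / δ ^ (-n))) :=
        lintegral_ofReal_le_of_meas_lt_le_div _ (hgm.pow_const _).aemeasurable
          (ae_of_all _ fun x => Real.rpow_nonneg (hg x).le _) (Real.rpow_pos_of_pos hδ _)
          (Real.rpow_le_rpow_of_nonpos hr hrδ.le (neg_nonpos.mpr hn.le))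
          (ae_of_all _ fun x => Real.rpow_le_rpow_of_nonpos hr (hgr x) (neg_nonpos.mpr hn.le))
          hC.le fun t ht => (Measure.restrict_le_self _).trans
            (measure_lt_rpow_neg_le σ hn hg hσ (Real.rpow_pos_of_pos hδ _ |>.trans ht.1))
    _ ≤ ENNReal.ofReal (C * δ ^ n) * ENNReal.ofReal (δ ^ (-n))
          + ENNReal.ofReal (C * (n * Real.log (δ / r))) := by rw [hlog]; gcongr
    _ ≤ ENNReal.ofReal (C * (1 + n) * (1 + Real.log (δ / r))) := by
      have hlog0 : 0 ≤ Real.log (δ / r) := Real.log_nonneg ((one_le_div hr).mpr hrδ.le)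
      rw [← ENNReal.ofReal_mul (by positivity), mul_assoc, ← Real.rpow_add hδ, add_neg_cancel,
        Real.rpow_zero, mul_one, ← ENNReal.ofReal_add hC.le (by positivity)]
      exact ENNReal.ofReal_le_ofReal (by nlinarith [mul_nonneg hC.le hlog0, mul_nonneg hC.le hn.le])
end

section
/- Growth of Lᵠ means of a polynomial on circles (model case of the level-set lemma): Let P be a complex polynomial of degree at most N, let q ≥ 1 be real, and let R ≥ 1. Then ∫₀^{2π} |P(R·e^{iθ})|^q dθ ≤ R^{N·q} · ∫₀^{2π} |P(e^{iθ})|^q dθ. In particular, if N ≥ 1 and 1 ≤ R ≤ 1 + 2/N, then ∫₀^{2π} |P(R·e^{iθ})|^q dθ ≤ e^{2q} · ∫₀^{2π} |P(e^{iθ})|^q dθ, with constant independent of N, P and R. -/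
open MeasureTheory Real intervalIntegral

/-!
Write `P z = z ^ N * Q z⁻¹` with `Q = P.reflect N`. Then the `L^q` mean of `P` on the circle of
radius `R` is `R ^ (N q)` times that of `Q` on the circle of radius `R⁻¹`, and on the unit circle
the means of `P` and `Q` agree. So it suffices that circle means of `‖f‖ ^ q` increase with the
radius for holomorphic `f`. By the Poisson formula and Jensen's inequality, `‖f w‖ ^ q` is at most
the Poisson integral of `‖f‖ ^ q`; averaging over `w` on a smaller circle gives back the mean on the
larger one, because the Poisson kernel between two concentric circles is symmetric in the two
angles and has mass one. Finally `(1 + 2 / N) ^ N ≤ e ^ 2`.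
-/

section

open Complex Metric Set

theorem Real.rpow_add_mul_rpow_mul_sub_le_rpow {a x q : ℝ} (ha : 0 < a) (hx : 0 ≤ x) (hq : 1 ≤ q) :
    a ^ q + q * a ^ (q - 1) * (x - a) ≤ x ^ q := by
  have hbern := one_add_mul_self_le_rpow_one_add (s := x / a - 1) (by
    have : 0 ≤ x / a := by positivity
    linarith) hq
  rw [add_sub_cancel, div_rpow hx ha.le, le_div_iff₀ (rpow_pos_of_pos ha q)] at hbern
  calc a ^ q + q * a ^ (q - 1) * (x - a) = (1 + q * (x / a - 1)) * a ^ q := by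
        rw [rpow_sub_one ha.ne']
        field_simp
    _ ≤ x ^ q := hbern

theorem Real.circleAverage_mul_rpow_le_circleAverage_mul_rpow {k g : ℂ → ℝ} {c : ℂ} {R q : ℝ}
    (hq : 1 ≤ q)
    (hk : ∀ z ∈ sphere c |R|, 0 ≤ k z) (hg : ∀ z ∈ sphere c |R|, 0 ≤ g z)
    (hk1 : circleAverage k c R = 1) (hkg : CircleIntegrable (k * g) c R)
    (hkgq : CircleIntegrable (fun z ↦ k z * g z ^ q) c R) :
    circleAverage (k * g) c R ^ q ≤ circleAverage (fun z ↦ k z * g z ^ q) c R := by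
  have hk_int : CircleIntegrable k c R := by
    by_contra h
    simp [circleAverage.integral_undef h] at hk1
  set m := circleAverage (k * g) c R
  have hm : 0 ≤ m := circleAverage_nonneg_of_nonneg fun z hz ↦ mul_nonneg (hk z hz) (hg z hz)
  rcases hm.eq_or_lt with hm0 | hm0
  · rw [← hm0, zero_rpow (by linarith)]
    exact circleAverage_nonneg_of_nonneg fun z hz ↦
      mul_nonneg (hk z hz) (rpow_nonneg (hg z hz) q)
  -- integrate the tangent line of `x ↦ x ^ q` at `m` against the probability weight `k`
  have htangent : (fun z ↦ k z * (m ^ q + q * m ^ (q - 1) * (g z - m)))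
      = (m ^ q - q * m ^ (q - 1) * m) • k + (q * m ^ (q - 1)) • (k * g) := by
    ext z
    simp only [Pi.add_apply, Pi.smul_apply, Pi.mul_apply, smul_eq_mul]
    ring
  calc m ^ q = circleAverage (fun z ↦ k z * (m ^ q + q * m ^ (q - 1) * (g z - m))) c R := by
        rw [htangent, circleAverage_add (hk_int.const_smul) (hkg.const_smul), circleAverage_smul,
          circleAverage_smul, hk1, smul_eq_mul, smul_eq_mul]
        ring
    _ ≤ circleAverage (fun z ↦ k z * g z ^ q) c R := by
        refine circleAverage_mono ?_ hkgq fun z hz ↦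
          mul_le_mul_of_nonneg_left (rpow_add_mul_rpow_mul_sub_le_rpow hm0 (hg z hz) hq) (hk z hz)
        rw [htangent]
        exact hk_int.const_smul.add hkg.const_smul

variable {E : Type*} [NormedAddCommGroup E] [NormedSpace ℂ E]

theorem Real.norm_circleAverage_le_circleAverage_norm {f : ℂ → E} {c : ℂ} {R : ℝ} :
    ‖circleAverage f c R‖ ≤ circleAverage (fun z ↦ ‖f z‖) c R := by
  rw [circleAverage, circleAverage, norm_smul, smul_eq_mul, norm_inv,
    Real.norm_of_nonneg two_pi_pos.le]
  gcongr
  exact norm_integral_le_integral_norm two_pi_pos.le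

theorem two_pi_mul_circleAverage_eq_integral (F : ℂ → ℝ) (R : ℝ) :
    2 * π * circleAverage F 0 R = ∫ θ in 0..2 * π, F (R * Complex.exp (θ * I)) := by
  rw [circleAverage_def, smul_eq_mul, ← mul_assoc, mul_inv_cancel₀ two_pi_pos.ne', one_mul]
  simp only [circleMap, zero_add]

theorem circleMap_mem_ball {c : ℂ} {r R : ℝ} (hr : 0 ≤ r) (hrR : r < R) (θ : ℝ) :
    circleMap c r θ ∈ ball c R := by
  rw [mem_ball, dist_eq_norm, circleMap_sub_center, norm_circleMap_zero, abs_of_nonneg hr]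
  exact hrR

theorem circleMap_ne_circleMap {c : ℂ} {r R : ℝ} (hr : 0 ≤ r) (hrR : r < R) (θ t : ℝ) :
    circleMap c r θ ≠ circleMap c R t := by
  intro h
  have := congrArg (fun z ↦ ‖z - c‖) h
  simp only [circleMap_sub_center, norm_circleMap_zero, abs_of_nonneg hr,
    abs_of_nonneg (hr.trans hrR.le)] at this
  exact hrR.ne this

theorem poissonKernel_nonneg {c w z : ℂ} (h : ‖w - c‖ ≤ ‖z - c‖) : 0 ≤ poissonKernel c w z := by
  rw [poissonKernel_def]
  have := pow_le_pow_left₀ (norm_nonneg _) h 2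
  exact div_nonneg (sub_nonneg.2 this) (sq_nonneg _)

theorem continuousOn_poissonKernel (c : ℂ) :
    ContinuousOn (fun p : ℂ × ℂ ↦ poissonKernel c p.1 p.2) {p | p.1 ≠ p.2} := by
  simp only [poissonKernel_def]
  refine ContinuousOn.div (by fun_prop) (by fun_prop) fun p hp ↦ ?_
  simpa [sub_eq_zero] using Ne.symm hp

theorem circleAverage_poissonKernel {c w : ℂ} {R : ℝ} (hw : w ∈ ball c R) :
    circleAverage (poissonKernel c w) c R = 1 := by
  convert (InnerProductSpace.harmonicOnNhd_const (1 : ℝ)).circleAverage_poissonKernel_smul hw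
    using 2
  ext z
  simp

theorem poissonKernel_circleMap_comm (c : ℂ) (r R θ t : ℝ) :
    poissonKernel c (circleMap c r θ) (circleMap c R t)
      = poissonKernel c (circleMap c r t) (circleMap c R θ) := by
  have hdist : ‖circleMap 0 R t - circleMap 0 r θ‖ = ‖circleMap 0 R θ - circleMap 0 r t‖ := by
    rw [← sq_eq_sq₀ (norm_nonneg _) (norm_nonneg _), Complex.sq_norm, Complex.sq_norm]
    simp only [Complex.normSq_apply, circleMap, zero_add, sub_re, sub_im, mul_re, mul_im,
      ofReal_re, ofReal_im, exp_ofReal_mul_I_re, exp_ofReal_mul_I_im]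
    linear_combination (R ^ 2 - r ^ 2) * (Real.sin_sq_add_cos_sq t - Real.sin_sq_add_cos_sq θ)
  simp only [poissonKernel_def, circleMap_sub_center, hdist]
  simp [norm_circleMap_zero]

variable [CompleteSpace E]

theorem DiffContOnCl.norm_rpow_le_circleAverage_poissonKernel_mul {f : ℂ → E} {c w : ℂ}
    {R q : ℝ} (hf : DiffContOnCl ℂ f (ball c R)) (hw : w ∈ ball c R) (hq : 1 ≤ q) :
    ‖f w‖ ^ q ≤ Real.circleAverage (fun z ↦ poissonKernel c w z * ‖f z‖ ^ q) c R := by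
  have hR : 0 < R := pos_of_mem_ball hw
  have hsphere : sphere c |R| = sphere c R := by rw [abs_of_pos hR]
  have hk : ∀ z ∈ sphere c |R|, 0 ≤ poissonKernel c w z := fun z hz ↦ by
    rw [hsphere, mem_sphere_iff_norm] at hz
    rw [mem_ball_iff_norm, ← hz] at hw
    exact poissonKernel_nonneg hw.le
  have hk_cont : ContinuousOn (poissonKernel c w) (sphere c R) :=
    (continuousOn_poissonKernel c).comp (f := fun z ↦ (w, z)) (by fun_prop) fun z hz ↦ by
      show w ≠ z
      rintro rfl
      rw [mem_sphere_iff_norm] at hz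
      rw [mem_ball_iff_norm, hz] at hw
      exact hw.false
  have hf_cont : ContinuousOn f (sphere c R) :=
    hf.continuousOn.mono (by rw [closure_ball c hR.ne']; exact sphere_subset_closedBall)
  calc ‖f w‖ ^ q = ‖Real.circleAverage (poissonKernel c w • f) c R‖ ^ q := by
        rw [hf.circleAverage_poissonKernel_smul hw]
    _ ≤ Real.circleAverage (poissonKernel c w * fun z ↦ ‖f z‖) c R ^ q := by
        gcongr
        refine norm_circleAverage_le_circleAverage_norm.trans_eq
          (circleAverage_congr_sphere fun z hz ↦ ?_)
        simp [norm_smul, Real.norm_of_nonneg (hk z hz)]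
    _ ≤ Real.circleAverage (fun z ↦ poissonKernel c w z * ‖f z‖ ^ q) c R :=
        circleAverage_mul_rpow_le_circleAverage_mul_rpow hq hk (fun _ _ ↦ norm_nonneg _)
          (circleAverage_poissonKernel hw)
          ((hk_cont.mul hf_cont.norm).circleIntegrable hR.le)
          ((hk_cont.mul (hf_cont.norm.rpow_const fun _ _ ↦ Or.inr (by linarith))).circleIntegrable
            hR.le)

theorem DiffContOnCl.circleAverage_norm_rpow_le {f : ℂ → E} {c : ℂ} {r R q : ℝ}
    (hf : DiffContOnCl ℂ f (ball c R)) (hr : 0 ≤ r) (hrR : r ≤ R) (hq : 1 ≤ q) :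
    Real.circleAverage (fun z ↦ ‖f z‖ ^ q) c r ≤ Real.circleAverage (fun z ↦ ‖f z‖ ^ q) c R := by
  rcases hrR.eq_or_lt with rfl | hrR
  · rfl
  have hR : 0 < R := hr.trans_lt hrR
  set g : ℂ → ℝ := fun z ↦ ‖f z‖ ^ q
  set K : ℝ → ℝ → ℝ := fun θ t ↦ poissonKernel c (circleMap c r θ) (circleMap c R t)
  have hg : ContinuousOn g (closedBall c R) := by
    rw [← closure_ball c hR.ne']
    exact hf.continuousOn.norm.rpow_const fun _ _ ↦ Or.inr (by linarith)
  have hg_outer : Continuous fun t ↦ g (circleMap c R t) :=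
    hg.comp_continuous (by fun_prop) (circleMap_mem_closedBall c hR.le)
  have hg_inner : Continuous fun θ ↦ g (circleMap c r θ) :=
    hg.comp_continuous (by fun_prop) fun θ ↦
      ball_subset_closedBall (circleMap_mem_ball hr hrR θ)
  have hKg : Continuous fun p : ℝ × ℝ ↦ K p.1 p.2 * g (circleMap c R p.2) := by
    refine Continuous.mul ?_ (hg_outer.comp continuous_snd)
    exact (continuousOn_poissonKernel c).comp_continuous
      (f := fun p : ℝ × ℝ ↦ (circleMap c r p.1, circleMap c R p.2)) (by fun_prop)
      fun p ↦ circleMap_ne_circleMap hr hrR p.1 p.2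
  have hpointwise (θ : ℝ) :
      g (circleMap c r θ) ≤ (2 * π)⁻¹ * ∫ t in 0..2 * π, K θ t * g (circleMap c R t) :=
    hf.norm_rpow_le_circleAverage_poissonKernel_mul (circleMap_mem_ball hr hrR θ) hq
  -- the kernel is symmetric in the two angles, so its mass in `θ` is also one
  have hmass (t : ℝ) : ∫ θ in 0..2 * π, K θ t = 2 * π := by
    have h := circleAverage_poissonKernel (circleMap_mem_ball (c := c) hr hrR t)
    simp only [K, poissonKernel_circleMap_comm c r R _ t]
    rw [circleAverage_def, smul_eq_mul, inv_mul_eq_one₀ two_pi_pos.ne'] at h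
    exact h.symm
  rw [circleAverage_def, circleAverage_def, smul_eq_mul, smul_eq_mul]
  gcongr
  calc ∫ θ in 0..2 * π, g (circleMap c r θ)
      ≤ ∫ θ in 0..2 * π, (2 * π)⁻¹ * ∫ t in 0..2 * π, K θ t * g (circleMap c R t) :=
        integral_mono_on two_pi_pos.le (hg_inner.intervalIntegrable _ _)
          ((continuous_const.mul (continuous_parametric_intervalIntegral_of_continuous'
            hKg 0 (2 * π))).intervalIntegrable _ _) fun θ _ ↦ hpointwise θ
    _ = (2 * π)⁻¹ * ∫ t in 0..2 * π, ∫ θ in 0..2 * π, K θ t * g (circleMap c R t) := by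
        rw [intervalIntegral.integral_const_mul, intervalIntegral_intervalIntegral_swap]
        exact (hKg.continuousOn.integrableOn_compact (isCompact_uIcc.prod isCompact_uIcc)).mono_set
          (prod_mono uIoc_subset_uIcc uIoc_subset_uIcc)
    _ = ∫ t in 0..2 * π, g (circleMap c R t) := by
        simp only [intervalIntegral.integral_mul_const, hmass]
        rw [intervalIntegral.integral_const_mul, ← mul_assoc, inv_mul_cancel₀ two_pi_pos.ne',
          one_mul]

theorem Polynomial.eval_reflect_inv_mul_pow {N : ℕ} {P : Polynomial ℂ} (hP : P.natDegree ≤ N)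
    {z : ℂ} (hz : z ≠ 0) : (P.reflect N).eval z⁻¹ * z ^ N = P.eval z := by
  have := invertibleOfNonzero hz
  have h := Polynomial.eval₂_reflect_mul_pow (RingHom.id ℂ) z N P hP
  rwa [invOf_eq_inv] at h

theorem Polynomial.circleAverage_norm_eval_rpow_eq_reflect {N : ℕ} {P : Polynomial ℂ}
    (hP : P.natDegree ≤ N) {R : ℝ} (hR : 0 < R) (q : ℝ) :
    circleAverage (fun z ↦ ‖P.eval z‖ ^ q) 0 R
      = R ^ ((N : ℝ) * q) * circleAverage (fun z ↦ ‖(P.reflect N).eval z‖ ^ q) 0 R⁻¹ := by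
  rw [circleAverage_eq_circleAverage_zero_one (f := fun z ↦ ‖P.eval z‖ ^ q),
    circleAverage_eq_circleAverage_zero_one (f := fun z ↦ ‖(P.reflect N).eval z‖ ^ q),
    ← circleAverage_zero_one_congr_inv (E := ℝ), ← smul_eq_mul, ← circleAverage_fun_smul]
  refine circleAverage_congr_sphere fun z hz ↦ ?_
  have hz1 : ‖z‖ = 1 := by simpa using hz
  have hz0 : z ≠ 0 := norm_ne_zero_iff.1 (by rw [hz1]; exact one_ne_zero)
  have hRz : (R : ℂ) * z⁻¹ ≠ 0 := mul_ne_zero (ofReal_ne_zero.2 hR.ne') (inv_ne_zero hz0)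
  simp only [add_zero, smul_eq_mul, ofReal_inv]
  rw [← eval_reflect_inv_mul_pow hP hRz, mul_inv, inv_inv, norm_mul, norm_pow, norm_mul, norm_inv,
    hz1, inv_one, mul_one,
    norm_real, Real.norm_of_nonneg hR.le, mul_rpow (norm_nonneg _) (by positivity), mul_comm,
    ← rpow_natCast, ← rpow_mul hR.le]

theorem Polynomial.circleAverage_norm_eval_rpow_le {N : ℕ} {P : Polynomial ℂ}
    (hP : P.natDegree ≤ N) {R q : ℝ} (hR : 1 ≤ R) (hq : 1 ≤ q) :
    circleAverage (fun z ↦ ‖P.eval z‖ ^ q) 0 R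
      ≤ R ^ ((N : ℝ) * q) * circleAverage (fun z ↦ ‖P.eval z‖ ^ q) 0 1 := by
  have hR0 : 0 < R := one_pos.trans_le hR
  rw [circleAverage_norm_eval_rpow_eq_reflect hP hR0, circleAverage_norm_eval_rpow_eq_reflect hP
    one_pos, inv_one, one_rpow, one_mul]
  gcongr
  exact (P.reflect N).differentiable.diffContOnCl.circleAverage_norm_rpow_le
    (inv_nonneg.2 hR0.le) (inv_le_one_of_one_le₀ hR) hq

theorem Real.rpow_natCast_mul_le_exp_of_le_one_add_div {N : ℕ} {R q : ℝ} (hR : 0 ≤ R)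
    (hRN : R ≤ 1 + 2 / N) (hq : 0 ≤ q) : R ^ ((N : ℝ) * q) ≤ exp (2 * q) := by
  have hpow : (1 + 2 / N : ℝ) ^ N ≤ exp 2 := by
    simpa [neg_div] using
      one_sub_div_pow_le_exp_neg (n := N) (t := -2) (by linarith [N.cast_nonneg (α := ℝ)])
  calc R ^ ((N : ℝ) * q) = (R ^ N) ^ q := by rw [rpow_mul hR, rpow_natCast]
    _ ≤ exp 2 ^ q := by gcongr; exact (pow_le_pow_left₀ hR hRN N).trans hpow
    _ = exp (2 * q) := by rw [← exp_mul]

end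

/-- Growth of `L^q` means of a polynomial on circles: if `deg P ≤ N`, `q ≥ 1`,
`R ≥ 1`, then `∫₀^{2π} |P(R e^{iθ})|^q dθ ≤ R^{Nq} ∫₀^{2π} |P(e^{iθ})|^q dθ`;
in particular for `N ≥ 1` and `1 ≤ R ≤ 1 + 2/N` the constant is at most `e^{2q}`. -/
theorem polynomial_circle_Lq_growth (N : ℕ) (P : Polynomial ℂ)
    (hP : P.natDegree ≤ N) (q : ℝ) (hq : 1 ≤ q) :
    (∀ R : ℝ, 1 ≤ R →
      (∫ θ in (0:ℝ)..(2 * Real.pi),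
          ‖P.eval ((R : ℂ) * Complex.exp ((θ : ℂ) * Complex.I))‖ ^ q)
        ≤ R ^ ((N : ℝ) * q) *
          ∫ θ in (0:ℝ)..(2 * Real.pi),
            ‖P.eval (Complex.exp ((θ : ℂ) * Complex.I))‖ ^ q) ∧
    (1 ≤ N → ∀ R : ℝ, 1 ≤ R → R ≤ 1 + 2 / (N : ℝ) →
      (∫ θ in (0:ℝ)..(2 * Real.pi),
          ‖P.eval ((R : ℂ) * Complex.exp ((θ : ℂ) * Complex.I))‖ ^ q)
        ≤ Real.exp (2 * q) *
          ∫ θ in (0:ℝ)..(2 * Real.pi),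
            ‖P.eval (Complex.exp ((θ : ℂ) * Complex.I))‖ ^ q) := by
  have hunit := two_pi_mul_circleAverage_eq_integral (fun z ↦ ‖P.eval z‖ ^ q) 1
  simp only [Complex.ofReal_one, one_mul] at hunit
  have hgrowth (R : ℝ) (hR : 1 ≤ R) :
      (∫ θ in (0:ℝ)..(2 * Real.pi),
          ‖P.eval ((R : ℂ) * Complex.exp ((θ : ℂ) * Complex.I))‖ ^ q)
        ≤ R ^ ((N : ℝ) * q) *
          ∫ θ in (0:ℝ)..(2 * Real.pi), ‖P.eval (Complex.exp ((θ : ℂ) * Complex.I))‖ ^ q := by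
    rw [← two_pi_mul_circleAverage_eq_integral (fun z ↦ ‖P.eval z‖ ^ q) R, ← hunit, mul_left_comm]
    gcongr
    exact P.circleAverage_norm_eval_rpow_le hP hR hq
  refine ⟨hgrowth, fun _ R hR hRN ↦ (hgrowth R hR).trans ?_⟩
  have hmean : 0 ≤ ∫ θ in (0:ℝ)..(2 * Real.pi), ‖P.eval (Complex.exp ((θ : ℂ) * Complex.I))‖ ^ q :=
    integral_nonneg two_pi_pos.le fun θ _ ↦ rpow_nonneg (norm_nonneg _) q
  exact mul_le_mul_of_nonneg_right
    (rpow_natCast_mul_le_exp_of_le_one_add_div (by linarith) hRN (by linarith)) hmean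
end
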